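/- Under the hypotheses above, if additionally the feasible set F is contained in a ball of radius R in ℝ^d (Euclidean norm), then the number of iterations m before termination satisfies m < (2RL/t + 1)^d; in particular, the cutting-plane algorithm terminates in finitely many steps. -/

import Mathlib

/-!
Each iterate `x m` violates its own cut by more than `t` while every later iterate satisfies it,
so the `L`-Lipschitz bound forces pairwise distances `> t / L`. Closed balls of radius slightly
more than `t / (2L)` around the iterates are then disjoint and fit in a ball of radius
`R + t / (2L)`; comparing Lebesgue volumes bounds their number by `(2RL/t + 1)^d`.
-/

open Metric MeasureTheory Filter

theorem Finset.exists_gt_forall_lt {ι : Type*} (s : Finset ι) {g : ι → ℝ} {ε : ℝ}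
    (h : ∀ i ∈ s, ε < g i) : ∃ ε' > ε, ∀ i ∈ s, ε' < g i :=
  ((eventually_all_finset s).2 fun i hi => eventually_lt_nhds (h i hi)).exists_gt

section Packing

variable {E : Type*} [NormedAddCommGroup E] [NormedSpace ℝ E] [FiniteDimensional ℝ E]
  [MeasurableSpace E] [BorelSpace E]

theorem card_mul_pow_finrank_le_of_pairwise_lt_dist {ι : Type*} {s : Finset ι} {x : ι → E}
    {c : E} {R r : ℝ} (hR : 0 ≤ R) (hr : 0 ≤ r) (hx : ∀ i ∈ s, x i ∈ closedBall c R)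
    (hsep : (s : Set ι).Pairwise fun i j => 2 * r < dist (x i) (x j)) :
    (s.card : ℝ) * r ^ Module.finrank ℝ E ≤ (R + r) ^ Module.finrank ℝ E := by
  set μ : Measure E := Measure.addHaar
  have hdisj : (s : Set ι).PairwiseDisjoint fun i => closedBall (x i) r :=
    hsep.mono' fun i j hij => closedBall_disjoint_closedBall (by linarith)
  have hsub : (⋃ i ∈ s, closedBall (x i) r) ⊆ closedBall c (R + r) :=
    Set.iUnion₂_subset fun i hi => closedBall_subset_closedBall' (by
      linarith [mem_closedBall.1 (hx i hi)])
  have hvol : (s.card : ENNReal) * ENNReal.ofReal (r ^ Module.finrank ℝ E) * μ (ball 0 1)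
      ≤ ENNReal.ofReal ((R + r) ^ Module.finrank ℝ E) * μ (ball 0 1) :=
    calc (s.card : ENNReal) * ENNReal.ofReal (r ^ Module.finrank ℝ E) * μ (ball 0 1)
        = ∑ i ∈ s, μ (closedBall (x i) r) := by
          simp [Measure.addHaar_closedBall μ _ hr, mul_assoc]
      _ = μ (⋃ i ∈ s, closedBall (x i) r) :=
          (measure_biUnion_finset hdisj fun i _ => measurableSet_closedBall).symm
      _ ≤ μ (closedBall c (R + r)) := measure_mono hsub
      _ = ENNReal.ofReal ((R + r) ^ Module.finrank ℝ E) * μ (ball 0 1) :=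
          Measure.addHaar_closedBall μ c (by linarith)
  rw [ENNReal.mul_le_mul_iff_left (measure_ball_pos μ 0 one_pos).ne' measure_ball_lt_top.ne,
    ← ENNReal.ofReal_natCast, ← ENNReal.ofReal_mul (by positivity)] at hvol
  exact (ENNReal.ofReal_le_ofReal_iff (by positivity)).1 hvol

/- The separation is strict, so the balls can be taken slightly larger than `r`; this is what
makes the bound strict. -/
theorem card_lt_div_add_one_pow_finrank_of_pairwise_lt_dist {ι : Type*} {s : Finset ι}
    {x : ι → E} {c : E} {R r : ℝ} (hR : 0 < R) (hr : 0 < r) (hE : Module.finrank ℝ E ≠ 0)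
    (hx : ∀ i ∈ s, x i ∈ closedBall c R)
    (hsep : (s : Set ι).Pairwise fun i j => 2 * r < dist (x i) (x j)) :
    (s.card : ℝ) < (R / r + 1) ^ Module.finrank ℝ E := by
  obtain ⟨ε, hε, hsep'⟩ := s.offDiag.exists_gt_forall_lt
    (g := fun p => dist (x p.1) (x p.2)) fun p hp => by
      obtain ⟨hi, hj, hij⟩ := Finset.mem_offDiag.1 hp
      exact hsep hi hj hij
  have hrε : r < ε / 2 := by linarith
  have hε₀ : 0 < ε / 2 := hr.trans hrε
  have hpack := card_mul_pow_finrank_le_of_pairwise_lt_dist hR.le hε₀.le hx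
    fun i hi j hj hij => by linarith [hsep' (i, j) (Finset.mem_offDiag.2 ⟨hi, hj, hij⟩)]
  calc (s.card : ℝ) ≤ (R / (ε / 2) + 1) ^ Module.finrank ℝ E := by
        rwa [div_add_one hε₀.ne', div_pow, le_div_iff₀ (pow_pos hε₀ _)]
    _ < (R / r + 1) ^ Module.finrank ℝ E :=
        pow_lt_pow_left₀ (by linarith [div_lt_div_of_pos_left hR hr hrε]) (by positivity) hE

end Packing

theorem lt_mul_dist_of_lt_of_nonpos {X : Type*} [PseudoMetricSpace X] {g : X → ℝ} {t L : ℝ}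
    (hlip : ∀ a b : X, |g a - g b| ≤ L * dist a b) {x y : X} (hx : t < g x) (hy : g y ≤ 0) :
    t < L * dist x y := by
  linarith [le_abs_self (g x - g y), hlip x y]

theorem stmt_3 {d : ℕ} {Θ : Type*} (hd : 1 ≤ d)
    (f : EuclideanSpace ℝ (Fin d) → Θ → ℝ)
    (t L R : ℝ) (ht : 0 < t) (hL : 0 < L) (hR : 0 < R)
    (hlip : ∀ θ : Θ, ∀ x₁ x₂ : EuclideanSpace ℝ (Fin d),
      |f x₁ θ - f x₂ θ| ≤ L * dist x₁ x₂)
    (F : Set (EuclideanSpace ℝ (Fin d))) (c : EuclideanSpace ℝ (Fin d))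
    (hFR : F ⊆ Metric.closedBall c R)
    (M : ℕ) (x : ℕ → EuclideanSpace ℝ (Fin d)) (θ : ℕ → Θ)
    (hF : ∀ m : ℕ, m < M → x m ∈ F)
    (hviol : ∀ m : ℕ, m < M → t < f (x m) (θ m))
    (hfeas : ∀ m n : ℕ, m < n → n < M → f (x n) (θ m) ≤ 0) :
    (M : ℝ) < (2 * R * L / t + 1) ^ d := by
  have hsep_lt {m n : ℕ} (hmn : m < n) (hn : n < M) : 2 * (t / (2 * L)) < dist (x m) (x n) := by
    have := lt_mul_dist_of_lt_of_nonpos (hlip (θ m)) (hviol m (hmn.trans hn)) (hfeas m n hmn hn)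
    rwa [mul_div_assoc', mul_div_mul_left t L two_ne_zero, div_lt_iff₀ hL, mul_comm]
  have hsep : (Finset.range M : Set ℕ).Pairwise
      fun m n => 2 * (t / (2 * L)) < dist (x m) (x n) := by
    intro m hm n hn hmn
    rcases hmn.lt_or_gt with h | h
    · exact hsep_lt h (Finset.mem_range.1 hn)
    · exact dist_comm (x m) (x n) ▸ hsep_lt h (Finset.mem_range.1 hm)
  have hball : ∀ m ∈ Finset.range M, x m ∈ closedBall c R :=
    fun m hm => hFR (hF m (Finset.mem_range.1 hm))
  have hbound := card_lt_div_add_one_pow_finrank_of_pairwise_lt_dist hR (by positivity)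
    (by rw [finrank_euclideanSpace_fin]; omega) hball hsep
  rwa [Finset.card_range, finrank_euclideanSpace_fin, div_div_eq_mul_div, ← mul_assoc,
    mul_comm R] at hbound
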